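/- arXiv:2404.02770 — 6 statements merged into one kernel-verified Lean document; each statement's English description precedes it below -/
import Mathlib

section
/- For all real numbers x and η, and every positive integer r, the inequality |sign(x+η)·|x+η|^((r-1)/r) − sign(x)·|x|^((r-1)/r)| ≤ 2^(1/r)·|η|^((r-1)/r) holds. -/
/-!
For `0 < p ≤ 1` the signed power is `p`-Hölder with constant `2 ^ (1 - p)`. When `a` and `b`
have the same sign this is the subadditivity of `t ↦ t ^ p` on `[0, ∞)`, which even gives
constant `1`; when they have opposite signs, `|⌈a⌋^p - ⌈b⌋^p| = |a| ^ p + |b| ^ p`, and concavity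
of `t ↦ t ^ p` at the midpoint of `|a|` and `|b|` bounds this by `2 ^ (1 - p) * (|a| + |b|) ^ p`.
For `p = 0` the signed power is the sign function, whose oscillation is `2`.
-/

/-- Signed power: `⌈y⌋^p = |y|^p * sign y`. -/
noncomputable def spow (p : ℝ) (y : ℝ) : ℝ := |y| ^ p * Real.sign y

namespace Real

lemma rpow_sub_rpow_le_rpow_sub {p a b : ℝ} (hp₀ : 0 ≤ p) (hp₁ : p ≤ 1) (hb : 0 ≤ b)
    (hba : b ≤ a) : a ^ p - b ^ p ≤ (a - b) ^ p := by
  have h := rpow_add_le_add_rpow (sub_nonneg.2 hba) hb hp₀ hp₁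
  rw [sub_add_cancel] at h
  linarith

lemma rpow_add_rpow_le_two_rpow_mul_rpow_add {p a b : ℝ} (hp₀ : 0 ≤ p) (hp₁ : p ≤ 1)
    (ha : 0 ≤ a) (hb : 0 ≤ b) : a ^ p + b ^ p ≤ 2 ^ (1 - p) * (a + b) ^ p := by
  have hmid := (concaveOn_rpow hp₀ hp₁).2 (Set.mem_Ici.2 ha) (Set.mem_Ici.2 hb)
    (by norm_num : (0 : ℝ) ≤ 1 / 2) (by norm_num : (0 : ℝ) ≤ 1 / 2) (by norm_num)
  simp only [smul_eq_mul] at hmid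
  rw [← mul_add, ← mul_add, one_div_mul_eq_div, one_div_mul_eq_div,
    div_rpow (add_nonneg ha hb) zero_le_two] at hmid
  rw [rpow_sub zero_lt_two, rpow_one]
  have h2p : 0 < (2 : ℝ) ^ p := rpow_pos_of_pos zero_lt_two p
  calc a ^ p + b ^ p ≤ 2 * ((a + b) ^ p / 2 ^ p) := by linarith
    _ = 2 / 2 ^ p * (a + b) ^ p := by field_simp

end Real

lemma spow_zero_left (y : ℝ) : spow 0 y = Real.sign y := by
  simp [spow]

lemma spow_neg (p y : ℝ) : spow p (-y) = -spow p y := by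
  simp [spow, Real.sign_neg]

lemma spow_of_nonneg {p y : ℝ} (hp : p ≠ 0) (hy : 0 ≤ y) : spow p y = y ^ p := by
  rcases hy.eq_or_lt with rfl | hy
  · simp [spow, Real.zero_rpow hp]
  · simp [spow, abs_of_pos hy, Real.sign_of_pos hy]

lemma abs_sign_sub_sign_le_two (a b : ℝ) : |Real.sign a - Real.sign b| ≤ 2 := by
  rcases Real.sign_apply_eq a with ha | ha | ha <;>
    rcases Real.sign_apply_eq b with hb | hb | hb <;> norm_num [ha, hb, abs_le]

lemma abs_spow_sub_spow_le_of_nonneg {p a b : ℝ} (hp₀ : 0 < p) (hp₁ : p ≤ 1) (hb : 0 ≤ b)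
    (hba : b ≤ a) : |spow p a - spow p b| ≤ (a - b) ^ p := by
  rw [spow_of_nonneg hp₀.ne' (hb.trans hba), spow_of_nonneg hp₀.ne' hb,
    abs_of_nonneg (sub_nonneg.2 (Real.rpow_le_rpow hb hba hp₀.le))]
  exact Real.rpow_sub_rpow_le_rpow_sub hp₀.le hp₁ hb hba

theorem abs_spow_sub_spow_le {p : ℝ} (hp₀ : 0 ≤ p) (hp₁ : p ≤ 1) (a b : ℝ) :
    |spow p a - spow p b| ≤ 2 ^ (1 - p) * |a - b| ^ p := by
  rcases hp₀.eq_or_lt with rfl | hp₀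
  · simpa [spow_zero_left] using abs_sign_sub_sign_le_two a b
  wlog hba : b ≤ a generalizing a b
  · rw [abs_sub_comm, abs_sub_comm a]
    exact this b a (le_of_not_ge hba)
  rw [abs_of_nonneg (sub_nonneg.2 hba)]
  have h_one_le : (1 : ℝ) ≤ 2 ^ (1 - p) := Real.one_le_rpow one_le_two (by linarith)
  have h_rpow_nonneg : 0 ≤ (a - b) ^ p := Real.rpow_nonneg (sub_nonneg.2 hba) p
  rcases le_or_gt 0 b with hb | hb
  · exact (abs_spow_sub_spow_le_of_nonneg hp₀ hp₁ hb hba).trans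
      (le_mul_of_one_le_left h_rpow_nonneg h_one_le)
  rcases le_or_gt a 0 with ha | ha
  · have h := abs_spow_sub_spow_le_of_nonneg hp₀ hp₁ (neg_nonneg.2 ha) (neg_le_neg hba)
    rw [spow_neg, spow_neg, neg_sub_neg, neg_sub_neg] at h
    exact h.trans (le_mul_of_one_le_left h_rpow_nonneg h_one_le)
  · have hsum : spow p a - spow p b = a ^ p + (-b) ^ p := by
      rw [← neg_neg b, spow_neg, spow_of_nonneg hp₀.ne' ha.le,
        spow_of_nonneg hp₀.ne' (neg_nonneg.2 hb.le), neg_neg, sub_neg_eq_add]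
    have hb' : 0 ≤ -b := neg_nonneg.2 hb.le
    rw [hsum, abs_of_nonneg (by positivity), sub_eq_add_neg]
    exact Real.rpow_add_rpow_le_two_rpow_mul_rpow_add hp₀.le hp₁ ha.le hb'

theorem stmt0 (x η : ℝ) (r : ℕ) (hr : 0 < r) :
    |spow (((r : ℝ) - 1) / r) (x + η) - spow (((r : ℝ) - 1) / r) x|
      ≤ (2 : ℝ) ^ ((1 : ℝ) / r) * |η| ^ (((r : ℝ) - 1) / r) := by
  have hr_one : (1 : ℝ) ≤ r := Nat.one_le_cast.2 hr
  have hp₀ : 0 ≤ ((r : ℝ) - 1) / r := div_nonneg (by linarith) (by linarith)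
  have hp₁ : ((r : ℝ) - 1) / r ≤ 1 := div_le_one_of_le₀ (by linarith) (by linarith)
  have h_exponent : 1 - ((r : ℝ) - 1) / r = 1 / r := by field_simp; ring
  simpa only [add_sub_cancel_left, h_exponent] using abs_spow_sub_spow_le hp₀ hp₁ (x + η) x
end

section
/- Let m ∈ ℕ, M ≥ 0, T > 0, define coefficients c_{i,j} by c_{0,0}=1, c_{0,j}=c_{i,0}=0 for i,j≠0, and c_{i,j} = ((j−1)c_{i,j−1} + i·c_{i−1,j−1})/j. Let f: ℝ → ℝ be m+1 times differentiable with |f^{(m+1)}| ≤ M, and define divided differences g_{1,k+1} = f(kT), g_{i+1,k+1} = (g_{i,k+1} − g_{i,k})/T. Then for all integers k ≥ m and all i = 1,…,m: |f^{(i)}(kT) − Σ_{j=i}^{m} T^{j−i}·c_{i,j}·g_{j+1,k+1}| ≤ c_{i,m+1}·M·T^{m+1−i}. -/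
/-!
Write `w_j(s) = s(s+1)⋯(s+j-1)/j!`, so that `c_{i,j} = w_j^{(i)}(0)` and `w_j(-p) = (-1)^j C(p,j)`.
With `∇^j f(x₀) = T^j g_{j+1,k+1}` the backward differences at `x₀ = kT`, Newton's backward formula
says that `Q(s) = ∑_{j ≤ m} ∇^j f(x₀) w_j(s)` interpolates `F(s) = f(x₀ + sT)` at `s = -m, …, 0`,
and the linear combination of the theorem is `Q^{(i)}(0) / T^i`.
Add `μ w_{m+1}`, which vanishes at the nodes, with `μ` chosen so that `F - Q - μ w_{m+1}` also has
vanishing `i`-th derivative at `0`. Repeated Rolle gives `m + 1 - i` zeros of the `i`-th derivative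
strictly left of `0`, hence a zero `ξ` of the `(m+1)`-st derivative, where it reads `F^{(m+1)}(ξ) = μ`.
So the error is `μ c_{i,m+1} / T^i = c_{i,m+1} T^{m+1-i} f^{(m+1)}(x₀ + ξT)`.
-/

/-- Output coefficients of the implicit robust exact differentiator. -/
noncomputable def ired_c : ℕ → ℕ → ℝ
  | 0, 0 => 1
  | 0, _ + 1 => 0
  | _ + 1, 0 => 0
  | i + 1, j + 1 => ((j : ℝ) * ired_c (i + 1) j + ((i : ℝ) + 1) * ired_c i j) / ((j : ℝ) + 1)

open Polynomial Finset

noncomputable def newtonBasis (j : ℕ) : ℝ[X] := C (j.factorial : ℝ)⁻¹ * ascPochhammer ℝ j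

noncomputable def newtonForm (a : ℕ → ℝ) (n : ℕ) : ℝ[X] :=
  ∑ j ∈ range (n + 1), C (a j) * newtonBasis j

theorem natDegree_newtonBasis (j : ℕ) : (newtonBasis j).natDegree = j := by
  rw [newtonBasis, natDegree_C_mul (by positivity), ascPochhammer_natDegree]

theorem newtonBasis_succ (j : ℕ) :
    newtonBasis (j + 1) = C ((j : ℝ) + 1)⁻¹ * (newtonBasis j * (X + C (j : ℝ))) := by
  rw [newtonBasis, newtonBasis, ascPochhammer_succ_right, Nat.factorial_succ, Nat.cast_mul,
    mul_inv, C_mul, ← C_eq_natCast]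
  push_cast
  ring

theorem newtonBasis_eval_neg_natCast (j p : ℕ) :
    (newtonBasis j).eval (-(p : ℝ)) = (-1) ^ j * p.choose j := by
  rw [newtonBasis, eval_mul, eval_C, ascPochhammer_eval_neg_eq_descPochhammer,
    Nat.cast_choose_eq_descPochhammer_div]
  ring

theorem iterate_derivative_newtonBasis_eval_zero (i j : ℕ) :
    (derivative^[i] (newtonBasis j)).eval 0 = ired_c i j := by
  induction j generalizing i with
  | zero => cases i <;> simp [newtonBasis, ired_c]
  | succ j ih =>
    cases i with
    | zero => simp [newtonBasis, ired_c]
    | succ i =>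
      rw [newtonBasis_succ, iterate_derivative_C_mul, mul_add, mul_comm _ (C _)]
      simp only [iterate_map_add, iterate_derivative_mul_X, iterate_derivative_C_mul, eval_add,
        eval_mul, eval_C, eval_X, eval_natCast, ih, add_tsub_cancel_right, ired_c, nsmul_eq_mul]
      push_cast
      ring

theorem iterate_derivative_newtonBasis_self (j : ℕ) : derivative^[j] (newtonBasis j) = 1 := by
  have hdeg : (derivative^[j] (newtonBasis j)).natDegree = 0 := by
    have := natDegree_iterate_derivative (newtonBasis j) j
    rw [natDegree_newtonBasis, Nat.sub_self] at this
    omega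
  have hlead : (ascPochhammer ℝ j).coeff j = 1 := by
    simpa [ascPochhammer_natDegree] using (monic_ascPochhammer ℝ j).coeff_natDegree
  rw [eq_C_of_natDegree_eq_zero hdeg, coeff_iterate_derivative, zero_add, Nat.descFactorial_self,
    newtonBasis, coeff_C_mul, hlead, nsmul_eq_mul, mul_one, mul_inv_cancel₀ (by positivity), C_1]

theorem ired_c_eq_zero_of_lt {i j : ℕ} (h : j < i) : ired_c i j = 0 := by
  rw [← iterate_derivative_newtonBasis_eval_zero,
    iterate_derivative_eq_zero ((natDegree_newtonBasis j).trans_lt h), eval_zero]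

theorem ired_c_nonneg (i j : ℕ) : 0 ≤ ired_c i j := by
  induction j generalizing i with
  | zero => cases i <;> simp [ired_c]
  | succ j ih =>
    cases i with
    | zero => simp [ired_c]
    | succ i =>
      have := ih i
      have := ih (i + 1)
      rw [ired_c]
      positivity

theorem ired_c_pos {i j : ℕ} (hi : 1 ≤ i) (hij : i ≤ j) : 0 < ired_c i j := by
  induction j generalizing i with
  | zero => omega
  | succ j ih =>
    obtain ⟨i, rfl⟩ : ∃ n, i = n + 1 := ⟨i - 1, by omega⟩
    rw [ired_c]
    refine div_pos ?_ (by positivity)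
    have := ired_c_nonneg i j
    have := ired_c_nonneg (i + 1) j
    rcases Nat.eq_zero_or_pos i with rfl | hi
    · rcases Nat.eq_zero_or_pos j with rfl | hj
      · norm_num [ired_c]
      · have := ih le_rfl hj
        positivity
    · have := ih hi (by omega)
      positivity

theorem natDegree_newtonForm_le (a : ℕ → ℝ) (n : ℕ) : (newtonForm a n).natDegree ≤ n := by
  refine natDegree_sum_le_of_forall_le _ _ fun j hj => (natDegree_C_mul_le _ _).trans ?_
  rw [natDegree_newtonBasis]
  exact mem_range_succ_iff.1 hj

theorem iterate_derivative_newtonForm_eval_zero (a : ℕ → ℝ) (i n : ℕ) :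
    (derivative^[i] (newtonForm a n)).eval 0 = ∑ j ∈ Icc i n, a j * ired_c i j := by
  simp only [newtonForm, iterate_derivative_sum, iterate_derivative_C_mul, eval_finsetSum,
    eval_mul, eval_C, iterate_derivative_newtonBasis_eval_zero]
  refine (sum_subset (fun j hj => ?_) fun j hj hji => ?_).symm
  · simp only [mem_Icc, mem_range] at hj ⊢
    omega
  · simp only [mem_Icc, mem_range, not_and, not_le] at hj hji
    rw [ired_c_eq_zero_of_lt (by omega), mul_zero]

/-- Newton's forward-difference formula, rewritten in the basis `newtonBasis`. -/
theorem newtonForm_fwdDiff_iter_eval_neg_natCast {M : Type*} [AddCommMonoid M] (f : M → ℝ)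
    (y h : M) {n p : ℕ} (hp : p ≤ n) :
    (newtonForm (fun j => (-1) ^ j * (fwdDiff h)^[j] f y) n).eval (-(p : ℝ)) = f (y + p • h) := by
  have hterm (j : ℕ) : (C ((-1) ^ j * (fwdDiff h)^[j] f y) * newtonBasis j).eval (-(p : ℝ)) =
      p.choose j • (fwdDiff h)^[j] f y := by
    rw [eval_mul, eval_C, newtonBasis_eval_neg_natCast, mul_mul_mul_comm, ← mul_pow, neg_one_mul,
      neg_neg, one_pow, one_mul, nsmul_eq_mul, mul_comm]
  rw [newtonForm, eval_finsetSum, shift_eq_sum_fwdDiff_iter h f p y]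
  simp_rw [hterm]
  refine (sum_subset (range_subset_range.2 (by omega)) fun j _ hj => ?_).symm
  rw [Nat.choose_eq_zero_of_lt (by simpa using hj), zero_smul]

section DividedDifferences

variable {f : ℝ → ℝ} {T : ℝ} {g : ℕ → ℤ → ℝ} {n : ℕ}
  (hg1 : ∀ k : ℤ, g 1 (k + 1) = f (k * T))
  (hgi : ∀ i, 1 ≤ i → i ≤ n → ∀ k : ℤ, g (i + 1) (k + 1) = (g i (k + 1) - g i k) / T)
include hg1 hgi

/-- The backward difference `∇^j f (kT)` is `(-1)^j` times the forward difference of step `-T`. -/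
theorem pow_mul_eq_neg_one_pow_mul_fwdDiff_iter (hT : T ≠ 0) {j : ℕ} (hj : j ≤ n) (k : ℤ) :
    T ^ j * g (j + 1) (k + 1) = (-1) ^ j * (fwdDiff (-T))^[j] f (k * T) := by
  induction j generalizing k with
  | zero => simp [hg1]
  | succ j ih =>
    have hprev := ih (by omega) (k - 1)
    rw [sub_add_cancel, Int.cast_sub, Int.cast_one, sub_one_mul, sub_eq_add_neg] at hprev
    calc T ^ (j + 1) * g (j + 1 + 1) (k + 1)
        = T ^ j * g (j + 1) (k + 1) - T ^ j * g (j + 1) k := by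
          rw [hgi (j + 1) (by omega) (by omega)]
          field_simp
          ring
      _ = (-1) ^ (j + 1) * (fwdDiff (-T))^[j + 1] f (k * T) := by
          rw [ih (by omega), hprev, Function.iterate_succ_apply', fwdDiff]
          ring

theorem newtonForm_dividedDiff_eval_neg_natCast (hT : T ≠ 0) (k : ℤ) {p : ℕ} (hp : p ≤ n) :
    (newtonForm (fun j => T ^ j * g (j + 1) (k + 1)) n).eval (-(p : ℝ)) = f (k * T + T * -p) := by
  have hcoeff : newtonForm (fun j => T ^ j * g (j + 1) (k + 1)) n =
      newtonForm (fun j => (-1) ^ j * (fwdDiff (-T))^[j] f (k * T)) n :=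
    sum_congr rfl fun j hj => by
      dsimp only
      rw [pow_mul_eq_neg_one_pow_mul_fwdDiff_iter hg1 hgi hT (mem_range_succ_iff.1 hj)]
  rw [hcoeff, newtonForm_fwdDiff_iter_eval_neg_natCast _ _ _ hp, nsmul_eq_mul]
  ring_nf

end DividedDifferences

section IteratedDeriv

variable {𝕜 F : Type*} [NontriviallyNormedField 𝕜] [NormedAddCommGroup F] [NormedSpace 𝕜 F]

theorem iteratedDeriv_iteratedDeriv (m n : ℕ) (f : 𝕜 → F) :
    iteratedDeriv m (iteratedDeriv n f) = iteratedDeriv (m + n) f := by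
  simp only [iteratedDeriv_eq_iterate, Function.iterate_add_apply]

-- No smoothness is needed: `deriv_comp_mul_left` holds for every `f`.
theorem iteratedDeriv_comp_mul_left (c : 𝕜) (f : 𝕜 → F) (n : ℕ) :
    iteratedDeriv n (fun x => f (c * x)) = fun x => c ^ n • iteratedDeriv n f (c * x) := by
  induction n with
  | zero => simp
  | succ n ih =>
    ext x
    rw [iteratedDeriv_succ, ih, deriv_fun_const_smul_field,
      deriv_comp_mul_left c (iteratedDeriv n f), ← iteratedDeriv_succ, smul_smul, pow_succ]

theorem iteratedDeriv_comp_const_add_mul (a c : 𝕜) (f : 𝕜 → F) (n : ℕ) :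
    iteratedDeriv n (fun x => f (a + c * x)) = fun x => c ^ n • iteratedDeriv n f (a + c * x) := by
  rw [iteratedDeriv_comp_mul_left c (fun y => f (a + y)), iteratedDeriv_comp_const_add]

theorem iteratedDeriv_sub_of_differentiable {f g : 𝕜 → F} {n : ℕ}
    (hf : ∀ q < n, Differentiable 𝕜 (iteratedDeriv q f))
    (hg : ∀ q < n, Differentiable 𝕜 (iteratedDeriv q g)) :
    iteratedDeriv n (fun x => f x - g x) = fun x => iteratedDeriv n f x - iteratedDeriv n g x := by
  induction n with
  | zero => simp
  | succ n ih =>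
    ext x
    rw [iteratedDeriv_succ, ih (fun q hq => hf q (by omega)) (fun q hq => hg q (by omega)),
      deriv_fun_sub (hf n (by omega) x) (hg n (by omega) x), iteratedDeriv_succ, iteratedDeriv_succ]

theorem Polynomial.iteratedDeriv_eval (P : 𝕜[X]) (n : ℕ) :
    iteratedDeriv n (fun x => P.eval x) = fun x => (derivative^[n] P).eval x := by
  induction n with
  | zero => simp
  | succ n ih =>
    ext x
    rw [iteratedDeriv_succ, ih, Polynomial.deriv, Function.iterate_succ_apply']

end IteratedDeriv

theorem StrictMono.snoc {α : Type*} [Preorder α] {n : ℕ} {t : Fin (n + 1) → α}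
    (ht : StrictMono t) {b : α} (hb : ∀ p, t p < b) :
    StrictMono (Fin.snoc t b : Fin (n + 2) → α) := by
  refine Fin.strictMono_iff_lt_succ.2 fun p => ?_
  induction p using Fin.lastCases with
  | last => simpa using hb _
  | cast q =>
    rw [Fin.succ_castSucc, Fin.snoc_castSucc, Fin.snoc_castSucc]
    exact ht q.castSucc_lt_succ

theorem exists_strictMono_deriv_eq_zero {n : ℕ} {u : ℝ → ℝ} (hu : Continuous u)
    {t : Fin (n + 2) → ℝ} (ht : StrictMono t) (hz : ∀ p, u (t p) = 0) :
    ∃ t' : Fin (n + 1) → ℝ, StrictMono t' ∧ (∀ p, deriv u (t' p) = 0) ∧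
      ∀ p, t' p < t (Fin.last _) := by
  have hrolle (p : Fin (n + 1)) : ∃ c ∈ Set.Ioo (t p.castSucc) (t p.succ), deriv u c = 0 :=
    exists_deriv_eq_zero (ht p.castSucc_lt_succ) hu.continuousOn ((hz _).trans (hz _).symm)
  choose t' ht' hzero using hrolle
  refine ⟨t', fun a b hab => ?_, hzero, fun p => (ht' p).2.trans_le (ht.monotone p.succ.le_last)⟩
  calc t' a < t a.succ := (ht' a).2
    _ ≤ t b.castSucc := ht.monotone (Fin.succ_le_castSucc_iff.2 hab)
    _ < t' b := (ht' b).1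

theorem exists_strictMono_iteratedDeriv_eq_zero {k : ℕ} (r : ℕ) {u : ℝ → ℝ}
    (hu : ∀ q ≤ r, Continuous (iteratedDeriv q u))
    {t : Fin (k + r + 2) → ℝ} (ht : StrictMono t) (hz : ∀ p, u (t p) = 0) :
    ∃ t' : Fin (k + 1) → ℝ, StrictMono t' ∧ (∀ p, iteratedDeriv (r + 1) u (t' p) = 0) ∧
      ∀ p, t' p < t (Fin.last _) := by
  induction r generalizing u with
  | zero => simpa using exists_strictMono_deriv_eq_zero (hu 0 le_rfl) ht hz
  | succ r ih =>
    obtain ⟨s, hs, hsz, hslt⟩ := exists_strictMono_deriv_eq_zero (hu 0 (by omega)) ht hz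
    obtain ⟨t', ht', htz, htlt⟩ := ih (u := deriv u)
      (fun q hq => by simpa [← iteratedDeriv_succ'] using hu (q + 1) (by omega)) hs hsz
    exact ⟨t', ht', fun p => by rw [iteratedDeriv_succ']; exact htz p,
      fun p => (htlt p).trans (hslt _)⟩

theorem exists_iteratedDeriv_eq_zero_of_strictMono_zeros {n i : ℕ} (hi : 1 ≤ i) (hin : i ≤ n)
    {u : ℝ → ℝ} (hu : ∀ q ≤ n, Continuous (iteratedDeriv q u)) {t : Fin (n + 1) → ℝ}
    (ht : StrictMono t) (hz : ∀ p, u (t p) = 0) (hzi : iteratedDeriv i u (t (Fin.last n)) = 0) :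
    ∃ ξ, iteratedDeriv (n + 1) u ξ = 0 := by
  obtain ⟨r, rfl⟩ : ∃ r, i = r + 1 := ⟨i - 1, by omega⟩
  obtain ⟨a, rfl⟩ : ∃ a, n = a + (r + 1) := ⟨n - (r + 1), by omega⟩
  obtain ⟨s, hs, hsz, hslt⟩ :=
    exists_strictMono_iteratedDeriv_eq_zero (k := a) r (fun q hq => hu q (by omega)) ht hz
  have hlen : 0 + a + 2 = a + 2 := by omega
  set w : Fin (0 + a + 2) → ℝ := Fin.snoc s (t (Fin.last _)) ∘ Fin.cast hlen with hw
  have hwmono : StrictMono w := (hs.snoc hslt).comp (Fin.castOrderIso hlen).strictMono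
  have hwz (p : Fin (0 + a + 2)) : iteratedDeriv (r + 1) u (w p) = 0 := by
    rw [hw, Function.comp_apply]
    induction Fin.cast hlen p using Fin.lastCases with
    | last => simpa using hzi
    | cast q => simpa using hsz q
  have hv (q : ℕ) (hq : q ≤ a) : Continuous (iteratedDeriv q (iteratedDeriv (r + 1) u)) := by
    rw [iteratedDeriv_iteratedDeriv]
    exact hu _ (by omega)
  obtain ⟨ξ, -, hξ, -⟩ := exists_strictMono_iteratedDeriv_eq_zero (k := 0) a hv hwmono hwz
  refine ⟨ξ 0, ?_⟩
  rw [← hξ 0, iteratedDeriv_iteratedDeriv]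
  congr 1
  omega

theorem exists_iteratedDeriv_sub_eval_iterate_derivative_eq {m i : ℕ} (hi : 1 ≤ i) (him : i ≤ m)
    {F : ℝ → ℝ} (hF : ∀ q ≤ m, Differentiable ℝ (iteratedDeriv q F)) {Q : ℝ[X]}
    (hQ : Q.natDegree ≤ m) (hQF : ∀ p ≤ m, Q.eval (-(p : ℝ)) = F (-p)) :
    ∃ ξ, iteratedDeriv i F 0 - (derivative^[i] Q).eval 0 =
      ired_c i (m + 1) * iteratedDeriv (m + 1) F ξ := by
  have hc : 0 < ired_c i (m + 1) := ired_c_pos hi (by omega)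
  set μ := (iteratedDeriv i F 0 - (derivative^[i] Q).eval 0) / ired_c i (m + 1) with hμ
  set R := Q + C μ * newtonBasis (m + 1)
  have hderiv (q : ℕ) (hq : q ≤ m + 1) (x : ℝ) : iteratedDeriv q (fun x => F x - R.eval x) x =
      iteratedDeriv q F x - (derivative^[q] R).eval x := by
    have hR (q' : ℕ) : Differentiable ℝ (iteratedDeriv q' fun x => R.eval x) := by
      rw [Polynomial.iteratedDeriv_eval]
      exact Polynomial.differentiable _
    simp only [iteratedDeriv_sub_of_differentiable (n := q) (fun q' hq' => hF q' (by omega))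
      (fun q' _ => hR q'), Polynomial.iteratedDeriv_eval]
  have hzero (p : Fin (m + 1)) : F ((p : ℝ) - m) - R.eval ((p : ℝ) - m) = 0 := by
    have hnode : (p : ℝ) - m = -((m - p : ℕ) : ℝ) := by
      rw [Nat.cast_sub (by omega)]
      ring
    rw [hnode, eval_add, eval_mul, eval_C, newtonBasis_eval_neg_natCast,
      Nat.choose_eq_zero_of_lt (by omega), hQF _ (by omega)]
    simp
  have hzero_i : iteratedDeriv i (fun x => F x - R.eval x) 0 = 0 := by
    rw [hderiv i (by omega), iterate_map_add, eval_add,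
      iterate_derivative_C_mul, eval_mul, eval_C, iterate_derivative_newtonBasis_eval_zero, hμ]
    field_simp
    ring
  obtain ⟨ξ, hξ⟩ := exists_iteratedDeriv_eq_zero_of_strictMono_zeros hi him
    (fun q hq => (continuous_congr (hderiv q (by omega))).2
      ((hF q hq).continuous.sub (derivative^[q] R).continuous))
    (t := fun p : Fin (m + 1) => (p : ℝ) - m) (fun a b hab => by simpa using hab) hzero
    (by simpa using hzero_i)
  have htop : derivative^[m + 1] R = C μ := by
    rw [iterate_map_add, iterate_derivative_eq_zero (by omega), iterate_derivative_C_mul,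
      iterate_derivative_newtonBasis_self, zero_add, mul_one]
  rw [hderiv _ le_rfl, htop, eval_C, sub_eq_zero] at hξ
  refine ⟨ξ, ?_⟩
  rw [hξ, hμ]
  field_simp

theorem stmt11_general (m : ℕ) (M T : ℝ) (hT : 0 < T) (f : ℝ → ℝ)
    (hdiff : ∀ i, i ≤ m → Differentiable ℝ (iteratedDeriv i f))
    (hbound : ∀ t : ℝ, |iteratedDeriv (m + 1) f t| ≤ M)
    (g : ℕ → ℤ → ℝ)
    (hg1 : ∀ k : ℤ, g 1 (k + 1) = f ((k : ℝ) * T))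
    (hgi : ∀ i : ℕ, 1 ≤ i → i ≤ m + 1 → ∀ k : ℤ,
      g (i + 1) (k + 1) = (g i (k + 1) - g i k) / T) :
    ∀ k : ℕ, m ≤ k → ∀ i, 1 ≤ i → i ≤ m →
      |iteratedDeriv i f ((k : ℝ) * T)
          - ∑ j ∈ Finset.Icc i m, T ^ (j - i) * ired_c i j * g (j + 1) ((k : ℤ) + 1)|
        ≤ ired_c i (m + 1) * M * T ^ (m + 1 - i) := by
  intro k _ i hi him
  set x₀ := (k : ℝ) * T
  have hF (q : ℕ) := iteratedDeriv_comp_const_add_mul x₀ T f q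
  obtain ⟨ξ, hξ⟩ := exists_iteratedDeriv_sub_eval_iterate_derivative_eq hi him
    (F := fun s => f (x₀ + T * s)) (fun q hq => by rw [hF]; have := hdiff q hq; fun_prop)
    (natDegree_newtonForm_le _ m) fun p hp => by
      simpa using newtonForm_dividedDiff_eval_neg_natCast hg1
        (fun i hi₁ hi₂ => hgi i hi₁ (by omega)) hT.ne' k hp
  rw [hF, hF, iterate_derivative_newtonForm_eval_zero] at hξ
  simp only [smul_eq_mul, mul_zero, add_zero] at hξ
  have hsum : ∑ j ∈ Icc i m, T ^ j * g (j + 1) (k + 1) * ired_c i j =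
      T ^ i * ∑ j ∈ Icc i m, T ^ (j - i) * ired_c i j * g (j + 1) (k + 1) := by
    rw [mul_sum]
    refine sum_congr rfl fun j hj => ?_
    rw [← pow_mul_pow_sub T (mem_Icc.1 hj).1]
    ring
  have herror : iteratedDeriv i f x₀ - ∑ j ∈ Icc i m, T ^ (j - i) * ired_c i j * g (j + 1) (k + 1)
      = ired_c i (m + 1) * T ^ (m + 1 - i) * iteratedDeriv (m + 1) f (x₀ + T * ξ) := by
    rw [hsum, ← pow_mul_pow_sub T (show i ≤ m + 1 by omega)] at hξ
    refine mul_left_cancel₀ (pow_ne_zero i hT.ne') ?_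
    linear_combination hξ
  have hfactor : 0 ≤ ired_c i (m + 1) * T ^ (m + 1 - i) := by
    have := ired_c_nonneg i (m + 1)
    positivity
  rw [herror, abs_mul, abs_of_nonneg hfactor]
  exact (mul_le_mul_of_nonneg_left (hbound _) hfactor).trans_eq (by ring)

theorem stmt11 (m : ℕ) (hm : 1 ≤ m) (M T : ℝ) (hM : 0 ≤ M) (hT : 0 < T) (f : ℝ → ℝ)
    (hdiff : ∀ i, i ≤ m → Differentiable ℝ (iteratedDeriv i f))
    (hbound : ∀ t : ℝ, |iteratedDeriv (m + 1) f t| ≤ M)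
    (g : ℕ → ℤ → ℝ)
    (hg1 : ∀ k : ℤ, g 1 (k + 1) = f ((k : ℝ) * T))
    (hgi : ∀ i : ℕ, 1 ≤ i → i ≤ m + 1 → ∀ k : ℤ,
      g (i + 1) (k + 1) = (g i (k + 1) - g i k) / T) :
    ∀ k : ℕ, m ≤ k → ∀ i, 1 ≤ i → i ≤ m →
      |iteratedDeriv i f ((k : ℝ) * T)
          - ∑ j ∈ Finset.Icc i m, T ^ (j - i) * ired_c i j * g (j + 1) ((k : ℤ) + 1)|
        ≤ ired_c i (m + 1) * M * T ^ (m + 1 - i) :=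
  stmt11_general m M T hT f hdiff hbound g hg1 hgi
end

section
/- Let β_1 = 1, γ_1 = 2, and let α_2,…,α_n > 0 satisfy α_{j+1}·γ_j^j ∈ (1,2), with β_{j+1} = (β_j^j + α_{j+1})^{1/j} and γ_{j+1} = (2γ_j^j/(2 − α_{j+1}γ_j^j))^{1/j} for j = 1,…,n−1. Define V_1(ξ) = |ξ_1| and V_j(ξ) = max{V_{j−1}(ξ), α_j^{−1/(j−1)}·|⌈ξ_j⌋^{(j−1)/j} − ξ_{j−1}|^{1/(j−1)}} for j = 2,…,n, where ξ ∈ ℝⁿ. Then |ξ_j| ≤ β_j^j · V_j(ξ)^j for all ξ ∈ ℝⁿ and j = 1,…,n. -/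
/-- Recursively constructed Lyapunov function candidates:
`V 1 ξ = |ξ 1|`,
`V j ξ = max (V (j-1) ξ) ((α j)^(-1/(j-1)) * |⌈ξ j⌋^((j-1)/j) - ξ (j-1)|^(1/(j-1)))`. -/
noncomputable def lyapV (α : ℕ → ℝ) : ℕ → (ℕ → ℝ) → ℝ
  | 0, _ => 0
  | 1, ξ => |ξ 1|
  | r + 2, ξ =>
    max (lyapV α (r + 1) ξ)
      ((α (r + 2)) ^ (-(1 : ℝ) / ((r : ℝ) + 1)) *
        |spow (((r : ℝ) + 1) / ((r : ℝ) + 2)) (ξ (r + 2)) - ξ (r + 1)| ^ ((1 : ℝ) / ((r : ℝ) + 1)))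

lemma lyapV_nonneg (α : ℕ → ℝ) : ∀ j ξ, 0 ≤ lyapV α j ξ
  | 0, _ => le_refl 0
  | 1, _ => abs_nonneg _
  | (r+2), ξ => le_trans (lyapV_nonneg α (r+1) ξ) (le_max_left _ _)

lemma abs_spow {p : ℝ} (hp : p ≠ 0) (y : ℝ) : |spow p y| = |y| ^ p := by
  unfold spow
  rcases eq_or_ne y 0 with h | h
  · simp [h, Real.zero_rpow hp]
  · rcases h.lt_or_gt with h | h
    · rw [Real.sign_of_neg h, abs_mul]
      simp [abs_of_nonneg (Real.rpow_nonneg (abs_nonneg y) p)]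
    · rw [Real.sign_of_pos h, abs_mul]
      simp [abs_of_nonneg (Real.rpow_nonneg (abs_nonneg y) p)]

theorem stmt13 (n : ℕ) (hn : 1 ≤ n) (α β γ : ℕ → ℝ)
    (hα : ∀ j, 2 ≤ j → j ≤ n → 0 < α j)
    (hβ1 : β 1 = 1) (hγ1 : γ 1 = 2)
    (hrec : ∀ j, 1 ≤ j → j ≤ n - 1 →
      α (j + 1) * (γ j) ^ j ∈ Set.Ioo (1 : ℝ) 2 ∧
      β (j + 1) = (β j ^ j + α (j + 1)) ^ ((1 : ℝ) / j) ∧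
      γ (j + 1) = (2 * (γ j) ^ j / (2 - α (j + 1) * (γ j) ^ j)) ^ ((1 : ℝ) / j)) :
    ∀ ξ : ℕ → ℝ, ∀ j, 1 ≤ j → j ≤ n → |ξ j| ≤ (β j) ^ j * (lyapV α j ξ) ^ j := by
  have hβpos : ∀ j, 1 ≤ j → j ≤ n → 0 < β j := by
    intro j
    induction j with
    | zero => omega
    | succ r ih =>
      intro _ hjn
      cases r with
      | zero => simpa [hβ1] using one_pos
      | succ s =>
        obtain ⟨-, hβrec, -⟩ := hrec (s+1) (by omega) (by omega)
        rw [hβrec]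
        have h1 : 0 < β (s+1) := ih (by omega) (by omega)
        have h2 : 0 < α (s+2) := hα (s+2) (by omega) hjn
        exact Real.rpow_pos_of_pos (by positivity) _
  intro ξ j
  induction j with
  | zero => intro h; exact absurd h (by omega)
  | succ r ih =>
    intro _ hjn
    cases r with
    | zero => simp [lyapV, hβ1]
    | succ s =>
      have hs2 : s + 2 ≤ n := hjn
      have ihs := ih (by omega) (by omega)
      obtain ⟨-, hβrec, -⟩ := hrec (s+1) (by omega) (by omega)
      have ha : 0 < α (s+2) := hα (s+2) (by omega) hs2
      have hβp : 0 < β (s+1) := hβpos (s+1) (by omega) (by omega)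
      set a := α (s+2) with ha_def
      set V := lyapV α (s+2) ξ with hV
      have hVnn : 0 ≤ V := lyapV_nonneg α (s+2) ξ
      have hV1 : lyapV α (s+1) ξ ≤ V := le_max_left _ _
      have hV1nn := lyapV_nonneg α (s+1) ξ
      set w := spow (((s:ℝ)+1)/((s:ℝ)+2)) (ξ (s+2)) with hw
      have h2 : a ^ (-(1:ℝ)/((s:ℝ)+1)) * |w - ξ (s+1)| ^ ((1:ℝ)/((s:ℝ)+1)) ≤ V :=
        le_max_right _ _
      have hs1 : (0:ℝ) < (s:ℝ)+1 := by positivity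
      have h3 : |w - ξ (s+1)| ^ ((1:ℝ)/((s:ℝ)+1)) ≤ a ^ ((1:ℝ)/((s:ℝ)+1)) * V := by
        rw [neg_div, Real.rpow_neg ha.le,
          inv_mul_le_iff₀ (Real.rpow_pos_of_pos ha _)] at h2
        exact h2
      have key1 : |w - ξ (s+1)| ≤ a * V ^ (s+1) := by
        have hcast : ((1:ℝ)/((s:ℝ)+1)) * ((s+1:ℕ):ℝ) = 1 := by
          push_cast; field_simp
        calc |w - ξ (s+1)|
            = (|w - ξ (s+1)| ^ ((1:ℝ)/((s:ℝ)+1))) ^ (s+1:ℕ) := by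
              rw [← Real.rpow_natCast (|w - ξ (s+1)| ^ ((1:ℝ)/((s:ℝ)+1))) (s+1),
                ← Real.rpow_mul (abs_nonneg _), hcast, Real.rpow_one]
          _ ≤ (a ^ ((1:ℝ)/((s:ℝ)+1)) * V) ^ (s+1:ℕ) :=
              pow_le_pow_left₀ (Real.rpow_nonneg (abs_nonneg _) _) h3 _
          _ = a * V ^ (s+1) := by
              rw [mul_pow, ← Real.rpow_natCast (a ^ ((1:ℝ)/((s:ℝ)+1))) (s+1),
                ← Real.rpow_mul ha.le, hcast, Real.rpow_one]
      have key2 : |w| ≤ (β (s+1) ^ (s+1) + a) * V ^ (s+1) := by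
        calc |w| ≤ |w - ξ (s+1)| + |ξ (s+1)| := by
              have := abs_add_le (w - ξ (s+1)) (ξ (s+1)); simpa using this
          _ ≤ a * V ^ (s+1) + β (s+1) ^ (s+1) * (lyapV α (s+1) ξ) ^ (s+1) :=
              add_le_add key1 ihs
          _ ≤ a * V ^ (s+1) + β (s+1) ^ (s+1) * V ^ (s+1) := by gcongr
          _ = (β (s+1) ^ (s+1) + a) * V ^ (s+1) := by ring
      have hp : (((s:ℝ)+1)/((s:ℝ)+2)) ≠ 0 := by positivity
      have habs : |w| = |ξ (s+2)| ^ (((s:ℝ)+1)/((s:ℝ)+2)) := abs_spow hp _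
      have hx : |ξ (s+2)| = |w| ^ (((s:ℝ)+2)/((s:ℝ)+1)) := by
        rw [habs, ← Real.rpow_mul (abs_nonneg _),
          show ((s:ℝ)+1)/((s:ℝ)+2) * (((s:ℝ)+2)/((s:ℝ)+1)) = 1 by field_simp,
          Real.rpow_one]
      have hB : (0:ℝ) < β (s+1) ^ (s+1) + a := by positivity
      have hcast2 : ((1:ℝ)/((s:ℝ)+1)) * ((s+2:ℕ):ℝ) = ((s:ℝ)+2)/((s:ℝ)+1) := by
        push_cast; field_simp
      rw [hx]
      calc |w| ^ (((s:ℝ)+2)/((s:ℝ)+1))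
          ≤ ((β (s+1) ^ (s+1) + a) * V ^ (s+1)) ^ (((s:ℝ)+2)/((s:ℝ)+1)) :=
            Real.rpow_le_rpow (abs_nonneg _) key2 (by positivity)
        _ = (β (s+1) ^ (s+1) + a) ^ (((s:ℝ)+2)/((s:ℝ)+1)) *
              (V ^ (s+1)) ^ (((s:ℝ)+2)/((s:ℝ)+1)) :=
            Real.mul_rpow hB.le (by positivity)
        _ = β (s+2) ^ (s+2) * V ^ (s+2) := by
            congr 1
            · rw [hβrec, ← Real.rpow_natCast ((β (s+1) ^ (s+1) + a) ^ ((1:ℝ)/((s+1:ℕ):ℝ))) (s+2),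
                ← Real.rpow_mul hB.le]
              congr 1
              push_cast; field_simp
            · rw [← Real.rpow_natCast V (s+1), ← Real.rpow_mul hVnn,
                ← Real.rpow_natCast V (s+2)]
              congr 1
              push_cast; field_simp
end

section
/- Let L, T > 0, λ₁, λ₂ > 0, and consider the first-order HIDD: z_{1,k+1} = z_{1,k} + T·z_{2,k} + T·λ₁·L^{1/2}·⌈u_k − z_{1,k+1}⌋^{1/2} + (λ₂LT²/2)·ξ_k, z_{2,k+1} = z_{2,k} + T·λ₂·L·ξ_k with ξ_k ∈ ⌈u_k − z_{1,k+1}⌋⁰, input u_k = λ₂·L·T²·k/2, and initial conditions z_{1,1} = z_{2,1} = 0. Then the sequence defined by z_{1,k+1} = u_k and z_{2,k+1} = [1 − (−1)^k]·λ₂LT/2 is a solution, and its output y_{1,k} = z_{2,k+1} satisfies y_{1,k} − λ₂LT/2 = (λ₂LT/2)·(−1)^{k+1}, i.e., exhibits persistent chattering of amplitude λ₂LT/2. -/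
/-- Set-valued sign function `⌈y⌋⁰`: `{sign y}` for `y ≠ 0` and `[-1, 1]` for `y = 0`. -/
noncomputable def signSet (y : ℝ) : Set ℝ :=
  if y = 0 then Set.Icc (-1) 1 else {Real.sign y}

theorem stmt15 (L T lam1 lam2 : ℝ) (hL : 0 < L) (hT : 0 < T)
    (hlam1 : 0 < lam1) (hlam2 : 0 < lam2)
    (u : ℕ → ℝ) (hu : ∀ k, u k = lam2 * L * T ^ 2 * k / 2)
    (z1 z2 : ℕ → ℝ) (hinit1 : z1 1 = 0) (hinit2 : z2 1 = 0)
    (hz1 : ∀ k, 1 ≤ k → z1 (k + 1) = u k)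
    (hz2 : ∀ k, 1 ≤ k → z2 (k + 1) = (1 - (-1 : ℝ) ^ k) * (lam2 * L * T / 2)) :
    (∃ ξ : ℕ → ℝ, ∀ k, 1 ≤ k →
      ξ k ∈ signSet (u k - z1 (k + 1)) ∧
      z1 (k + 1) = z1 k + T * z2 k + T * lam1 * L ^ ((1 : ℝ) / 2) *
          spow ((1 : ℝ) / 2) (u k - z1 (k + 1)) + lam2 * L * T ^ 2 / 2 * ξ k ∧
      z2 (k + 1) = z2 k + T * lam2 * L * ξ k) ∧
    ∀ k, 1 ≤ k → z2 (k + 1) - lam2 * L * T / 2 = lam2 * L * T / 2 * (-1 : ℝ) ^ (k + 1) := by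
  constructor
  · refine ⟨fun k => (-1 : ℝ) ^ (k + 1), fun k hk => ?_⟩
    have hs : u k - z1 (k + 1) = 0 := by rw [hz1 k hk]; ring
    refine ⟨?_, ?_, ?_⟩
    · rw [hs]
      simp only [signSet, if_pos rfl, Set.mem_Icc]
      rcases Nat.even_or_odd (k + 1) with h | h
      · simp [h.neg_one_pow]
      · simp [h.neg_one_pow]
    · rw [hs]
      simp only [spow, Real.sign_zero, mul_zero]
      rw [hz1 k hk]
      obtain ⟨m, rfl⟩ := Nat.exists_eq_add_of_le hk
      rcases Nat.eq_zero_or_pos m with rfl | hm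
      · rw [hu, hinit1, hinit2]
        push_cast
        ring
      · have h1 := hz1 m hm
        have h2 := hz2 m hm
        rw [show 1 + m = m + 1 by ring] at *
        rw [h1, h2]; simp only [hu]
        push_cast
        ring
    · rw [hz2 k hk]
      obtain ⟨m, rfl⟩ := Nat.exists_eq_add_of_le hk
      rcases Nat.eq_zero_or_pos m with rfl | hm
      · rw [hinit2]; norm_num; ring
      · have h2 := hz2 m hm
        rw [show 1 + m = m + 1 by ring] at *
        rw [h2]
        ring
  · intro k hk
    rw [hz2 k hk]
    ring
end

section
/- Let L, T > 0, λ₁, λ₂, λ₃ > 0, c ∈ ℝ, α ≥ 0, and consider the second-order differentiator family z_{1,k+1} = z_{1,k} + Tλ₁L^{1/3}⌈u_k − z_{1,k+1}⌋^{2/3} + Tz_{2,k+1} + c(T²/2)z_{3,k+1}; z_{2,k+1} = z_{2,k} + Tλ₂L^{2/3}⌈u_k − z_{1,k+1}⌋^{1/3} + Tz_{3,k+1}; z_{3,k+1} ∈ z_{3,k} + Tλ₃L⌈u_k − z_{1,k+1}⌋⁰, with input u_k = α·k²·T². Then the sequences z_{1,k+1} = u_k, z_{2,k+1} = 2αkT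 − (1+c)αT, z_{3,k+1} = 2α form a solution, and the error |z_{2,k+1} − 2αkT| = |1+c|·α·T is unbounded in α unless c = −1. -/
theorem stmt16 (L T lam1 lam2 lam3 c α : ℝ) (hL : 0 < L) (hT : 0 < T)
    (hlam1 : 0 < lam1) (hlam2 : 0 < lam2) (hlam3 : 0 < lam3) (hα : 0 ≤ α)
    (u : ℕ → ℝ) (hu : ∀ k, u k = α * k ^ 2 * T ^ 2)
    (z1 z2 z3 : ℕ → ℝ)
    (hz1 : ∀ k, 1 ≤ k → z1 (k + 1) = u k)
    (hz2 : ∀ k, 1 ≤ k → z2 (k + 1) = 2 * α * k * T - (1 + c) * α * T)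
    (hz3 : ∀ k, 1 ≤ k → z3 (k + 1) = 2 * α) :
    (∃ ξ : ℕ → ℝ, ∀ k, 2 ≤ k →
      ξ k ∈ signSet (u k - z1 (k + 1)) ∧
      z1 (k + 1) = z1 k + T * lam1 * L ^ ((1 : ℝ) / 3) *
          spow ((2 : ℝ) / 3) (u k - z1 (k + 1)) + T * z2 (k + 1)
            + c * (T ^ 2 / 2) * z3 (k + 1) ∧
      z2 (k + 1) = z2 k + T * lam2 * L ^ ((2 : ℝ) / 3) *
          spow ((1 : ℝ) / 3) (u k - z1 (k + 1)) + T * z3 (k + 1) ∧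
      z3 (k + 1) = z3 k + T * lam3 * L * ξ k) ∧
    (∀ k, 1 ≤ k → |z2 (k + 1) - 2 * α * k * T| = |1 + c| * α * T) ∧
    (c ≠ -1 → ∀ C : ℝ, ∃ α' : ℝ, 0 ≤ α' ∧ C < |1 + c| * α' * T) := by
  have hspow0 : ∀ p : ℝ, spow p 0 = 0 := by
    intro p; simp [spow, Real.sign_zero]
  refine ⟨⟨fun _ => 0, fun k hk => ?_⟩, fun k hk => ?_, fun hc C => ?_⟩
  · have hk1 : 1 ≤ k := by omega
    have hk1' : 1 ≤ k - 1 := by omega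
    have hkk : (k - 1) + 1 = k := by omega
    have hzk1 : z1 k = u (k - 1) := by rw [← hkk]; exact hz1 _ hk1'
    have hzk2 : z2 k = 2 * α * (k - 1 : ℕ) * T - (1 + c) * α * T := by
      rw [← hkk]; exact hz2 _ hk1'
    have hzk3 : z3 k = 2 * α := by rw [← hkk]; exact hz3 _ hk1'
    have hdiff : u k - z1 (k + 1) = 0 := by rw [hz1 k hk1]; ring
    have hcast : ((k - 1 : ℕ) : ℝ) = (k : ℝ) - 1 := by
      push_cast [hk1]; ring
    refine ⟨?_, ?_, ?_, ?_⟩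
    · rw [hdiff]; simp [signSet]
    · rw [hdiff, hspow0, hz1 k hk1, hzk1, hz2 k hk1, hz3 k hk1, hu, hu, hcast]
      push_cast
      ring
    · rw [hdiff, hspow0, hz2 k hk1, hzk2, hz3 k hk1, hcast]
      ring
    · simp only
      rw [hz3 k hk1, hzk3]; ring
  · rw [hz2 k hk]
    have : 2 * α * (k : ℝ) * T - (1 + c) * α * T - 2 * α * (k : ℝ) * T
        = -((1 + c) * α * T) := by ring
    rw [this, abs_neg, abs_mul, abs_mul, abs_of_nonneg hα, abs_of_nonneg hT.le]
  · have h1c : 0 < |1 + c| := by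
      rw [abs_pos]; intro h; apply hc; linarith
    refine ⟨(max C 0 + 1) / (|1 + c| * T), ?_, ?_⟩
    · positivity
    · have key : |1 + c| * ((max C 0 + 1) / (|1 + c| * T)) * T = max C 0 + 1 := by
        field_simp
      rw [key]
      have := le_max_left C 0
      linarith
end

section
/- Let n ≥ 2 be an integer, L, T > 0, λ₁,…,λ_n > 0 with λ_n > 1, and 0 ≤ N < 2^{−n}·L·T^n·(λ_n − 1). Define Ω = {x ∈ ℝⁿ : 2^{n−i+1}·T^{i−1}·|x_i| ≤ L·T^n·(λ_n − 1) for i = 1,…,n}. Consider the error dynamics x_{i,k+1} = x_{i,k} − T·L^{i/n}·λ_i·⌈x_{1,k+1} − η_k⌋^{(n−i)/n} + T·x_{i+1,k+1} for i = 1,…,n−1 and x_{n,k+1} ∈ x_{n,k} − T·L·λ_n·⌈x_{1,k+1} − η_k⌋⁰ − T·δ_k, with |η_k| ≤ N and |δ_k| ≤ L. Then x_K ∈ Ω implies x_{K+1} ∈ Ω and x_{1,K+1} = η_K. -/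
/-!
In the coordinates `u j = T ^ (j - 1) * x j`, the `n` update equations telescope into one scalar
equation for the sliding variable `v = x₁⁺ - η`: it equals a remainder `R` minus terms of the sign
of `v` minus `T ^ n * L * λₙ * s` with `s ∈ ⌈v⌋⁰`. Inside `Ω` the scaled coordinates are bounded
by `M / 2 ^ (n - j + 1)`, with `M = L * T ^ n * (λₙ - 1)`, so that `|R| < T ^ n * L * λₙ`, and a
nonzero `v` would have the opposite sign of itself; hence `v = 0`. With `v = 0` the injection terms
vanish and `u⁺ i = η - ∑_{j < i} u j`, whose size is controlled by the same geometric sum.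
-/

open Finset

theorem spow_zero_right (p : ℝ) : spow p 0 = 0 := by
  simp [spow]

theorem mul_spow_mul_sign_nonneg {a : ℝ} (ha : 0 ≤ a) (p y : ℝ) :
    0 ≤ a * spow p y * Real.sign y := by
  rw [spow, mul_assoc, mul_assoc]
  exact mul_nonneg ha (mul_nonneg (Real.rpow_nonneg (abs_nonneg y) p) (mul_self_nonneg _))

theorem eq_sum_Ico_add_of_eq_add_succ {G : Type*} [AddCommGroup G] {u e : ℕ → G} {n i : ℕ}
    (h : ∀ j, 1 ≤ j → j < n → u j = e j + u (j + 1)) (hi : 1 ≤ i) (hin : i ≤ n) :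
    u 1 = ∑ j ∈ Ico 1 i, e j + u i := by
  have he : ∑ j ∈ Ico 1 i, e j = ∑ j ∈ Ico 1 i, -(u (j + 1) - u j) :=
    sum_congr rfl fun j hj => by
      rw [mem_Ico] at hj
      rw [h j hj.1 (by omega)]
      abel
  rw [he, sum_neg_distrib, sum_Ico_sub u hi]
  abel

theorem eq_zero_of_eq_sub_sub_mul_sign {v R D c : ℝ} (hR : |R| < c)
    (hD : 0 ≤ D * Real.sign v) (hv : v ≠ 0 → v = R - D - c * Real.sign v) : v = 0 := by
  by_contra hne
  have hsq : Real.sign v * Real.sign v = 1 := by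
    rcases Real.sign_apply_eq_of_ne_zero v hne with h | h <;> simp [h]
  have hRs : R * Real.sign v ≤ |R| := by
    rcases Real.sign_apply_eq_of_ne_zero v hne with h | h <;> simp [h, neg_le_abs, le_abs_self]
  have hpos := Real.sign_mul_pos_of_ne_zero v hne
  have hexp : Real.sign v * v = R * Real.sign v - D * Real.sign v - c := by
    linear_combination Real.sign v * hv hne - c * hsq
  linarith

/-- In the coordinates `w j = T ^ (j - 1) * x j`, the set `Ω` becomes
`scaledBox n (L * T ^ n * (λₙ - 1))`. -/
def scaledBox (n : ℕ) (M : ℝ) : Set (ℕ → ℝ) :=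
  {w | ∀ j, 1 ≤ j → j ≤ n → 2 ^ (n - j + 1) * |w j| ≤ M}

theorem two_pow_mul_abs_sum_Ico_le {w : ℕ → ℝ} {M : ℝ} {n i : ℕ} (hw : w ∈ scaledBox n M)
    (hi : i ≤ n + 1) : 2 ^ n * |∑ j ∈ Ico 1 i, w j| ≤ (2 ^ (i - 1) - 1) * M := by
  have hterm : ∀ j ∈ Ico 1 i, 2 ^ n * |w j| ≤ 2 ^ (j - 1) * M := by
    intro j hj
    rw [mem_Ico] at hj
    have hsplit : (2 : ℝ) ^ n = 2 ^ (j - 1) * 2 ^ (n - j + 1) := by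
      rw [← pow_add]; congr 1; omega
    rw [hsplit, mul_assoc]
    exact mul_le_mul_of_nonneg_left (hw j hj.1 (by omega)) (by positivity)
  have hgeom : ∑ j ∈ Ico 1 i, (2 : ℝ) ^ (j - 1) = 2 ^ (i - 1) - 1 := by
    rw [sum_Ico_eq_sum_range]
    simp only [add_tsub_cancel_left]
    rw [geom_sum_eq (by norm_num)]
    norm_num
  calc 2 ^ n * |∑ j ∈ Ico 1 i, w j| ≤ ∑ j ∈ Ico 1 i, 2 ^ n * |w j| := by
        rw [← mul_sum]
        exact mul_le_mul_of_nonneg_left (abs_sum_le_sum_abs _ _) (by positivity)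
    _ ≤ ∑ j ∈ Ico 1 i, 2 ^ (j - 1) * M := sum_le_sum hterm
    _ = (2 ^ (i - 1) - 1) * M := by rw [← sum_mul, hgeom]

theorem abs_sub_sub_lt {S e η M N c : ℝ} {n : ℕ} (hS : 2 ^ n * |S| ≤ (2 ^ n - 1) * M)
    (he : M + |e| ≤ c) (hη : |η| ≤ N) (hN : 2 ^ n * N < M) : |S - e - η| < c := by
  have h2n : (0 : ℝ) < 2 ^ n := by positivity
  have htri : |S - e - η| ≤ |S| + |e| + |η| := by
    linarith [abs_sub S e, abs_sub (S - e) η]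
  refine lt_of_mul_lt_mul_left ?_ h2n.le
  nlinarith

theorem two_pow_mul_abs_sub_le {S η M N : ℝ} {n i : ℕ} (hi : 1 ≤ i) (hin : i ≤ n)
    (hS : 2 ^ n * |S| ≤ (2 ^ (i - 1) - 1) * M) (hη : |η| ≤ N) (hN : 2 ^ n * N < M) :
    2 ^ (n - i + 1) * |η - S| ≤ M := by
  have hsplit : (2 : ℝ) ^ n = 2 ^ (i - 1) * 2 ^ (n - i + 1) := by
    rw [← pow_add]; congr 1; omega
  have htri : |η - S| ≤ |η| + |S| := abs_sub _ _
  have h2n : (0 : ℝ) ≤ 2 ^ n := by positivity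
  have hscale := mul_le_mul_of_nonneg_left htri h2n
  have hηscale := mul_le_mul_of_nonneg_left hη h2n
  refine le_of_mul_le_mul_left ?_ (by positivity : (0 : ℝ) < 2 ^ (i - 1))
  rw [hsplit] at hS hN hscale hηscale
  linarith

theorem two_pow_mul_lt_of_lt_rpow_neg {N a : ℝ} {n : ℕ} (h : N < 2 ^ (-(n : ℝ)) * a) :
    2 ^ n * N < a := by
  rw [Real.rpow_neg zero_le_two, Real.rpow_natCast] at h
  rwa [← lt_inv_mul_iff₀ (by positivity)]

theorem scale_mem_scaledBox_iff {T M : ℝ} {n : ℕ} (hT : 0 < T) (y : ℕ → ℝ) :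
    (fun j => T ^ (j - 1) * y j) ∈ scaledBox n M ↔
      ∀ j, 1 ≤ j → j ≤ n → 2 ^ (n - j + 1) * T ^ (j - 1) * |y j| ≤ M := by
  simp only [scaledBox, Set.mem_ofPred_eq, abs_mul, abs_of_pos (pow_pos hT _), mul_assoc]

section ScaledDynamics

variable {n : ℕ} {u u' d : ℕ → ℝ} {M N η : ℝ}

/-- Here `d j` are the injection terms of the first `n - 1` equations and `c * s + e` the
discontinuous injection and perturbation of the last one. -/
theorem scaled_first_eq_of_mem_scaledBox {c e s : ℝ} (hn : 1 ≤ n) (hu : u ∈ scaledBox n M)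
    (hstep : ∀ j, 1 ≤ j → j < n → u' j = u j - d j + u' (j + 1))
    (hlast : u' n = u n - c * s - e) (hs : s ∈ signSet (u' 1 - η))
    (hd : ∀ j ∈ Ico 1 n, 0 ≤ d j * Real.sign (u' 1 - η))
    (he : M + |e| ≤ c) (hη : |η| ≤ N) (hN : 2 ^ n * N < M) : u' 1 = η := by
  rw [← sub_eq_zero]
  refine eq_zero_of_eq_sub_sub_mul_sign (R := ∑ j ∈ Ico 1 (n + 1), u j - e - η)
    (D := ∑ j ∈ Ico 1 n, d j) (c := c)
    (abs_sub_sub_lt (n := n) (two_pow_mul_abs_sum_Ico_le hu le_rfl) he hη hN)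
    (sum_mul (Ico 1 n) d _ ▸ sum_nonneg hd) fun hne => ?_
  rw [signSet, if_neg hne, Set.mem_singleton_iff] at hs
  have h1 := eq_sum_Ico_add_of_eq_add_succ hstep hn le_rfl
  rw [sum_sub_distrib, hlast] at h1
  rw [← hs, sum_Ico_succ_top hn, h1]
  ring

theorem scaled_mem_scaledBox_of_sliding
    (hstep : ∀ j, 1 ≤ j → j < n → u' j = u j + u' (j + 1)) (h1 : u' 1 = η)
    (hu : u ∈ scaledBox n M) (hη : |η| ≤ N) (hN : 2 ^ n * N < M) : u' ∈ scaledBox n M := by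
  intro i hi hin
  have hu' : u' i = η - ∑ j ∈ Ico 1 i, u j := by
    linarith [eq_sum_Ico_add_of_eq_add_succ hstep hi hin]
  rw [hu']
  exact two_pow_mul_abs_sub_le hi hin (two_pow_mul_abs_sum_Ico_le hu (by omega)) hη hN

end ScaledDynamics

theorem stmt17_general (n : ℕ) (hn : 2 ≤ n) (L T N : ℝ) (hL : 0 < L) (hT : 0 < T)
    (lam : ℕ → ℝ) (hlam : ∀ i, 1 ≤ i → i ≤ n → 0 < lam i)
    (hNsmall : N < 2 ^ (-(n : ℝ)) * L * T ^ n * (lam n - 1))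
    (x : ℕ → ℕ → ℝ) (η δ : ℕ → ℝ)
    (hη : ∀ k, |η k| ≤ N) (hδ : ∀ k, |δ k| ≤ L)
    (hdyn : ∀ i, 1 ≤ i → i ≤ n - 1 → ∀ k,
      x i (k + 1) = x i k
        - T * L ^ ((i : ℝ) / n) * lam i *
            spow (((n : ℝ) - i) / n) (x 1 (k + 1) - η k)
        + T * x (i + 1) (k + 1))
    (hdynn : ∀ k, ∃ s ∈ signSet (x 1 (k + 1) - η k),
      x n (k + 1) = x n k - T * L * lam n * s - T * δ k) :
    ∀ K : ℕ,
      (∀ i, 1 ≤ i → i ≤ n → 2 ^ (n - i + 1) * T ^ (i - 1) * |x i K| ≤ L * T ^ n * (lam n - 1)) →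
      (∀ i, 1 ≤ i → i ≤ n →
        2 ^ (n - i + 1) * T ^ (i - 1) * |x i (K + 1)| ≤ L * T ^ n * (lam n - 1)) ∧
      x 1 (K + 1) = η K := by
  intro K hΩ
  have hNM : 2 ^ n * N < L * T ^ n * (lam n - 1) :=
    two_pow_mul_lt_of_lt_rpow_neg (by simpa only [mul_assoc] using hNsmall)
  set M := L * T ^ n * (lam n - 1)
  set u : ℕ → ℝ := fun j => T ^ (j - 1) * x j K
  set u' : ℕ → ℝ := fun j => T ^ (j - 1) * x j (K + 1)
  have hu1 : u' 1 = x 1 (K + 1) := by simp [u']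
  have hΩu : u ∈ scaledBox n M := (scale_mem_scaledBox_iff hT _).2 hΩ
  have hstep : ∀ j, 1 ≤ j → j < n → u' j = u j
      - T ^ j * L ^ ((j : ℝ) / n) * lam j * spow (((n : ℝ) - j) / n) (u' 1 - η K)
      + u' (j + 1) := fun j hj hjn => by
    rw [hu1]
    simp only [u, u', hdyn j hj (by omega) K, Nat.add_sub_cancel,
      ← pow_sub_one_mul (by omega : j ≠ 0) T]
    ring
  obtain ⟨s, hs, hxn⟩ := hdynn K
  have hlast : u' n = u n - T ^ n * L * lam n * s - T ^ n * δ K := by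
    simp only [u, u', hxn, ← pow_sub_one_mul (by omega : n ≠ 0) T]
    ring
  have hinj : ∀ j ∈ Ico 1 n, 0 ≤ T ^ j * L ^ ((j : ℝ) / n) * lam j *
      spow (((n : ℝ) - j) / n) (u' 1 - η K) * Real.sign (u' 1 - η K) := fun j hj => by
    rw [mem_Ico] at hj
    exact mul_spow_mul_sign_nonneg (mul_pos (mul_pos (pow_pos hT j) (Real.rpow_pos_of_pos hL _))
      (hlam j hj.1 hj.2.le)).le _ _
  have hpert : M + |T ^ n * δ K| ≤ T ^ n * L * lam n := by
    rw [abs_mul, abs_of_pos (pow_pos hT n)]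
    nlinarith [pow_pos hT n, hδ K]
  have hx1 := scaled_first_eq_of_mem_scaledBox (by omega) hΩu hstep hlast (hu1 ▸ hs) hinj hpert
    (hη K) hNM
  have hslide : ∀ j, 1 ≤ j → j < n → u' j = u j + u' (j + 1) := fun j hj hjn => by
    simpa [hx1, spow_zero_right] using hstep j hj hjn
  exact ⟨(scale_mem_scaledBox_iff hT _).1
    (scaled_mem_scaledBox_of_sliding hslide hx1 hΩu (hη K) hNM), hu1 ▸ hx1⟩

theorem stmt17 (n : ℕ) (hn : 2 ≤ n) (L T N : ℝ) (hL : 0 < L) (hT : 0 < T)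
    (lam : ℕ → ℝ) (hlam : ∀ i, 1 ≤ i → i ≤ n → 0 < lam i) (hlamn : 1 < lam n)
    (hN : 0 ≤ N) (hNsmall : N < 2 ^ (-(n : ℝ)) * L * T ^ n * (lam n - 1))
    (x : ℕ → ℕ → ℝ) (η δ : ℕ → ℝ)
    (hη : ∀ k, |η k| ≤ N) (hδ : ∀ k, |δ k| ≤ L)
    (hdyn : ∀ i, 1 ≤ i → i ≤ n - 1 → ∀ k,
      x i (k + 1) = x i k
        - T * L ^ ((i : ℝ) / n) * lam i *
            spow (((n : ℝ) - i) / n) (x 1 (k + 1) - η k)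
        + T * x (i + 1) (k + 1))
    (hdynn : ∀ k, ∃ s ∈ signSet (x 1 (k + 1) - η k),
      x n (k + 1) = x n k - T * L * lam n * s - T * δ k) :
    ∀ K : ℕ,
      (∀ i, 1 ≤ i → i ≤ n → 2 ^ (n - i + 1) * T ^ (i - 1) * |x i K| ≤ L * T ^ n * (lam n - 1)) →
      (∀ i, 1 ≤ i → i ≤ n →
        2 ^ (n - i + 1) * T ^ (i - 1) * |x i (K + 1)| ≤ L * T ^ n * (lam n - 1)) ∧
      x 1 (K + 1) = η K :=
  stmt17_general n hn L T N hL hT lam hlam hNsmall x η δ hη hδ hdyn hdynn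
end
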